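/- If in the residual graph G^D the white vertices induce a path on j ≥ 3 vertices v₁v₂…v_j as a connected component of G^D[W], then playing v₂ makes both v₁ and v₂ red and v₃ blue or red, so the potential f = 5|W| + 3|B| decreases by at least 12. -/

import Mathlib

open SimpleGraph
open scoped Classical

/-- The closed neighborhood N[v] of a vertex. -/
def cN {V : Type*} (G : SimpleGraph V) (v : V) : Set V := insert v (G.neighborSet v)

/-- Closed neighborhood N[D] of a set of vertices. -/
noncomputable def nbhd {V : Type*} (G : SimpleGraph V) (D : Set V) : Set V :=
  ⋃ d ∈ D, cN G d

/-- A vertex is white in the residual graph G^D if it is not dominated. -/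
def isWhite {V : Type*} (G : SimpleGraph V) (D : Set V) (v : V) : Prop := v ∉ nbhd G D

/-- A vertex is red in G^D if its whole closed neighborhood is dominated. -/
def isRed {V : Type*} (G : SimpleGraph V) (D : Set V) (v : V) : Prop :=
  cN G v ⊆ nbhd G D

/-- A vertex is blue in G^D if it is dominated but has an undominated neighbor. -/
def isBlue {V : Type*} (G : SimpleGraph V) (D : Set V) (v : V) : Prop :=
  v ∈ nbhd G D ∧ ¬ isRed G D v

/-- The white-degree of a vertex: its number of white neighbors. -/
noncomputable def whiteDeg {V : Type*} [Fintype V] (G : SimpleGraph V) (D : Set V) (v : V) : ℕ :=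
  (Finset.univ.filter fun u => G.Adj v u ∧ isWhite G D u).card

/-- Potential function: 5 per white vertex, `wB` per blue vertex, 0 per red vertex. -/
noncomputable def pot {V : Type*} [Fintype V] (G : SimpleGraph V) (D : Set V) (wB : ℝ) : ℝ :=
  5 * ((Finset.univ.filter fun u => isWhite G D u).card : ℝ)
  + wB * ((Finset.univ.filter fun u => isBlue G D u).card : ℝ)


/-!
Playing `v` turns exactly the white vertices of `N[v]` non-white; of these only the ones that
are not red afterwards can become blue, and no previously dominated vertex becomes blue. Hence
the potential drops by at least `5·#(white ∩ N[v]) − 3·#(white ∩ N[v] not red)`. Playing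
`vtx 1` on a white path component, `white ∩ N[vtx 1] = {vtx 0, vtx 1, vtx 2}` and `vtx 0`,
`vtx 1` become red, so the drop is at least `15 − 3 = 12`.
-/

open Finset

section Domination

variable {V : Type*} (G : SimpleGraph V)

lemma mem_cN {v u : V} : u ∈ cN G v ↔ u = v ∨ G.Adj v u := by
  simp [cN]

lemma self_mem_cN (v : V) : v ∈ cN G v :=
  Set.mem_insert v _

lemma nbhd_union_singleton (D : Set V) (v : V) :
    nbhd G (D ∪ {v}) = nbhd G D ∪ cN G v := by
  simp [nbhd, Set.union_comm]

lemma isWhite_union_singleton_iff {D : Set V} {v u : V} :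
    isWhite G (D ∪ {v}) u ↔ isWhite G D u ∧ u ∉ cN G v := by
  simp only [isWhite, nbhd_union_singleton, Set.mem_union, not_or]

lemma isRed_union_singleton_iff {D : Set V} {v u : V} :
    isRed G (D ∪ {v}) u ↔ ∀ w ∈ cN G u, isWhite G D w → w ∈ cN G v := by
  simp only [isRed, isWhite, nbhd_union_singleton, Set.subset_def, Set.mem_union]
  exact forall₂_congr fun _ _ => or_iff_not_imp_left

lemma isRed_union_singleton_self (D : Set V) (v : V) : isRed G (D ∪ {v}) v := by
  rw [isRed, nbhd_union_singleton]
  exact Set.subset_union_right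

lemma isBlue_or_isRed_of_mem_nbhd {D : Set V} {u : V} (hu : u ∈ nbhd G D) :
    isBlue G D u ∨ isRed G D u :=
  or_iff_not_imp_right.2 fun h => ⟨hu, h⟩

section Potential

variable [Fintype V]

noncomputable def whiteCN (D : Set V) (v : V) : Finset V :=
  univ.filter fun u => isWhite G D u ∧ u ∈ cN G v

lemma card_white_union_singleton_add_card_whiteCN (D : Set V) (v : V) :
    #(univ.filter fun u => isWhite G (D ∪ {v}) u) + #(whiteCN G D v) =
      #(univ.filter fun u => isWhite G D u) := by
  rw [← card_filter_add_card_filter_not (s := univ.filter fun u => isWhite G D u)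
    (fun u => u ∈ cN G v)]
  simp only [filter_filter, whiteCN, isWhite_union_singleton_iff, add_comm]

lemma blue_union_singleton_subset (D : Set V) (v : V) :
    univ.filter (fun u => isBlue G (D ∪ {v}) u) ⊆
      univ.filter (fun u => isBlue G D u) ∪
        (whiteCN G D v).filter fun u => ¬ isRed G (D ∪ {v}) u := by
  intro u hu
  simp only [whiteCN, mem_union, mem_filter, mem_univ, true_and] at hu ⊢
  obtain ⟨hmem, hnotRed⟩ := hu
  rw [nbhd_union_singleton] at hmem
  by_cases hD : u ∈ nbhd G D
  · refine Or.inl ⟨hD, fun hred => hnotRed ?_⟩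
    rw [isRed, nbhd_union_singleton]
    exact hred.trans Set.subset_union_left
  · exact Or.inr ⟨⟨hD, hmem.resolve_left hD⟩, hnotRed⟩

theorem pot_union_singleton_le {wB : ℝ} (hwB : 0 ≤ wB) (D : Set V) (v : V) :
    pot G (D ∪ {v}) wB ≤ pot G D wB - 5 * #(whiteCN G D v) +
      wB * #((whiteCN G D v).filter fun u => ¬ isRed G (D ∪ {v}) u) := by
  have hW := card_white_union_singleton_add_card_whiteCN G D v
  have hB : (#(univ.filter fun u => isBlue G (D ∪ {v}) u) : ℝ) ≤
      #(univ.filter fun u => isBlue G D u) +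
        #((whiteCN G D v).filter fun u => ¬ isRed G (D ∪ {v}) u) := by
    exact_mod_cast (card_le_card (blue_union_singleton_subset G D v)).trans (card_union_le _ _)
  simp only [pot, ← hW]
  push_cast
  linarith [mul_le_mul_of_nonneg_left hB hwB]

end Potential

section Path

variable {G} {D : Set V} {j : ℕ} {vtx : ℕ → V}

lemma exists_eq_of_isWhite_mem_cN
    (hpath : ∀ i k, i < j → k < j → (G.Adj (vtx i) (vtx k) ↔ (k = i + 1 ∨ i = k + 1)))
    (hcomp : ∀ i, i < j → ∀ u, G.Adj (vtx i) u → isWhite G D u →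
      ∃ k, k < j ∧ u = vtx k)
    {i : ℕ} (hi : i < j) {w : V} (hw : w ∈ cN G (vtx i)) (hwD : isWhite G D w) :
    ∃ k < j, w = vtx k ∧ (k = i ∨ k = i + 1 ∨ i = k + 1) := by
  rcases (mem_cN G).1 hw with rfl | hadj
  · exact ⟨i, hi, rfl, Or.inl rfl⟩
  · obtain ⟨k, hk, rfl⟩ := hcomp i hi w hadj hwD
    exact ⟨k, hk, rfl, Or.inr ((hpath i k hi hk).1 hadj)⟩

lemma whiteCN_eq_of_path [Fintype V] {i : ℕ} (hi : i + 2 < j)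
    (hwhite : ∀ i, i < j → isWhite G D (vtx i))
    (hpath : ∀ i k, i < j → k < j → (G.Adj (vtx i) (vtx k) ↔ (k = i + 1 ∨ i = k + 1)))
    (hcomp : ∀ i, i < j → ∀ u, G.Adj (vtx i) u → isWhite G D u →
      ∃ k, k < j ∧ u = vtx k) :
    whiteCN G D (vtx (i + 1)) = {vtx i, vtx (i + 1), vtx (i + 2)} := by
  ext w
  simp only [whiteCN, mem_filter, mem_univ, true_and, mem_insert, mem_singleton]
  constructor
  · rintro ⟨hwD, hw⟩
    obtain ⟨k, -, rfl, hk⟩ := exists_eq_of_isWhite_mem_cN hpath hcomp (by omega) hw hwD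
    obtain rfl | rfl | rfl : k = i ∨ k = i + 1 ∨ k = i + 2 := by omega
    all_goals simp
  · have hadj : ∀ k, k < j → (k = i ∨ k = i + 2) → G.Adj (vtx (i + 1)) (vtx k) :=
      fun k hk hk' => (hpath _ k (by omega) hk).2 (by omega)
    rintro (rfl | rfl | rfl)
    · exact ⟨hwhite i (by omega), (mem_cN G).2 (Or.inr (hadj i (by omega) (Or.inl rfl)))⟩
    · exact ⟨hwhite (i + 1) (by omega), self_mem_cN G _⟩
    · exact ⟨hwhite (i + 2) hi, (mem_cN G).2 (Or.inr (hadj (i + 2) hi (Or.inr rfl)))⟩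

lemma isRed_union_singleton_path_start (hj : 1 < j)
    (hpath : ∀ i k, i < j → k < j → (G.Adj (vtx i) (vtx k) ↔ (k = i + 1 ∨ i = k + 1)))
    (hcomp : ∀ i, i < j → ∀ u, G.Adj (vtx i) u → isWhite G D u →
      ∃ k, k < j ∧ u = vtx k) :
    isRed G (D ∪ {vtx 1}) (vtx 0) := by
  rw [isRed_union_singleton_iff]
  intro w hw hwD
  obtain ⟨k, -, rfl, hk⟩ := exists_eq_of_isWhite_mem_cN hpath hcomp (by omega) hw hwD
  obtain rfl | rfl : k = 0 ∨ k = 1 := by omega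
  · exact (mem_cN G).2 (Or.inr ((hpath 1 0 hj (by omega)).2 (Or.inr rfl)))
  · exact self_mem_cN G _

end Path

end Domination

/-- If the white vertices contain a path component v₀v₁…v_{j-1} (j ≥ 3) of G^D[W],
then playing v₁ makes v₀ and v₁ red, makes v₂ blue or red, and decreases the potential
f = 5|W| + 3|B| by at least 12. -/
theorem stmt_10 {V : Type*} [Fintype V] (G : SimpleGraph V) (D : Set V)
    (j : ℕ) (hj : 3 ≤ j) (vtx : ℕ → V)
    (hinj : ∀ i k, i < j → k < j → vtx i = vtx k → i = k)
    (hwhite : ∀ i, i < j → isWhite G D (vtx i))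
    (hpath : ∀ i k, i < j → k < j → (G.Adj (vtx i) (vtx k) ↔ (k = i + 1 ∨ i = k + 1)))
    (hcomp : ∀ i, i < j → ∀ u, G.Adj (vtx i) u → isWhite G D u →
      ∃ k, k < j ∧ u = vtx k) :
    isRed G (D ∪ {vtx 1}) (vtx 0) ∧ isRed G (D ∪ {vtx 1}) (vtx 1) ∧
    (isBlue G (D ∪ {vtx 1}) (vtx 2) ∨ isRed G (D ∪ {vtx 1}) (vtx 2)) ∧
    pot G (D ∪ {vtx 1}) 3 ≤ pot G D 3 - 12 := by
  have hred0 := isRed_union_singleton_path_start (by omega) hpath hcomp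
  have hred1 := isRed_union_singleton_self G D (vtx 1)
  have hwhiteCN : whiteCN G D (vtx 1) = {vtx 0, vtx 1, vtx 2} :=
    whiteCN_eq_of_path (i := 0) (by omega) hwhite hpath hcomp
  have hne : ∀ i k, i < 3 → k < 3 → i ≠ k → vtx i ≠ vtx k :=
    fun i k hi hk hik h => hik (hinj i k (by omega) (by omega) h)
  refine ⟨hred0, hred1, isBlue_or_isRed_of_mem_nbhd G ?_, ?_⟩
  · rw [nbhd_union_singleton]
    exact Or.inr ((mem_cN G).2 (Or.inr ((hpath 1 2 (by omega) (by omega)).2 (Or.inl rfl))))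
  have hcard : #(whiteCN G D (vtx 1)) = 3 := by
    rw [hwhiteCN, card_insert_of_notMem, card_insert_of_notMem, card_singleton] <;>
      simp [hne 0 1, hne 0 2, hne 1 2]
  have hnotRed :
      (#((whiteCN G D (vtx 1)).filter fun u => ¬ isRed G (D ∪ {vtx 1}) u) : ℝ) ≤ 1 := by
    refine mod_cast (card_le_card fun u hu => ?_).trans (card_singleton (vtx 2)).le
    simp only [hwhiteCN, mem_filter, mem_insert, mem_singleton] at hu
    obtain ⟨rfl | rfl | rfl, hu⟩ := hu
    exacts [absurd hred0 hu, absurd hred1 hu, mem_singleton_self _]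
  have hdrop := pot_union_singleton_le G (by norm_num : (0 : ℝ) ≤ 3) D (vtx 1)
  rw [hcard, Nat.cast_ofNat] at hdrop
  linarith
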